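/- Let n ≥ 1 and d ≥ 0 be integers. For any l ≥ 1 and any positive integers k₁, …, k_l with k₁ + ⋯ + k_l = d + 1, one has ∑_{i=1}^{l} ∑_{j=0}^{k_i - 1} C(n+j-1, j) ≤ ∑_{j=0}^{d} C(n+j-1, j), where C(·,·) denotes the binomial coefficient. -/
import Mathlib


/-!
STATEMENT 2: For n ≥ 1, d ≥ 0, l ≥ 1 and positive integers k₁, …, k_l with
k₁ + ⋯ + k_l = d + 1, one has
∑_{i=1}^{l} ∑_{j=0}^{k_i - 1} C(n+j-1, j) ≤ ∑_{j=0}^{d} C(n+j-1, j).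
-/

private def F (n k : ℕ) : ℕ := ∑ j ∈ Finset.range k, Nat.choose (n + j - 1) j

private lemma t_mono (n : ℕ) (hn : 1 ≤ n) :
    Monotone (fun j => Nat.choose (n + j - 1) j) := by
  apply monotone_nat_of_le_succ
  intro j
  have h1 : n + (j + 1) - 1 = (n + j - 1) + 1 := by omega
  simp only [h1, Nat.choose_succ_succ]
  exact Nat.le_add_right _ _

private lemma f_superadd (n : ℕ) (hn : 1 ≤ n) (a b : ℕ) :
    F n a + F n b ≤ F n (a + b) := by
  unfold F
  rw [Finset.sum_range_add]
  gcongr with j hj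
  exact t_mono n hn (Nat.le_add_left j a)

private lemma f_sum (n : ℕ) (hn : 1 ≤ n) : ∀ (l : ℕ) (k : Fin l → ℕ),
    ∑ i, F n (k i) ≤ F n (∑ i, k i) := by
  intro l
  induction l with
  | zero => simp [F]
  | succ m ih =>
    intro k
    rw [Fin.sum_univ_succ, Fin.sum_univ_succ (f := k)]
    have h1 := ih (fun i => k i.succ)
    have h2 := f_superadd n hn (k 0) (∑ i : Fin m, k i.succ)
    omega

theorem length_sum_le_of_sum_eq (n d l : ℕ) (hn : 1 ≤ n) (hl : 1 ≤ l)
    (k : Fin l → ℕ) (hk : ∀ i, 1 ≤ k i) (hsum : ∑ i, k i = d + 1) :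
    ∑ i, ∑ j ∈ Finset.range (k i), Nat.choose (n + j - 1) j ≤
      ∑ j ∈ Finset.range (d + 1), Nat.choose (n + j - 1) j := by
  have := f_sum n hn l k
  rw [hsum] at this
  simpa [F] using this
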